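/- arXiv:2009.01402 — 6 statements merged into one kernel-verified Lean document; each statement's English description precedes it below -/
import Mathlib

section
/- Stern's diatomic sequence s, defined by s(0)=0, s(1)=1, s(2n)=s(n), s(2n+1)=s(n)+s(n+1), satisfies: every element of its 2-kernel is a ℤ-linear combination of the two sequences (s(n))_{n≥0} and (s(n+1))_{n≥0}. More precisely, for all ℓ ≥ 0 and 0 ≤ r < 2^ℓ, there exist integers a, b ≥ 0 with s(2^ℓ n + r) = a·s(n) + b·s(n+1) for all n. -/
/-!
Writing `r = 2r'` or `r = 2r' + 1`, the recurrences give
`s (2^(ℓ+1) n + 2r') = s (2^ℓ n + r')` and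
`s (2^(ℓ+1) n + 2r' + 1) = s (2^ℓ n + r') + s (2^ℓ n + r' + 1)`,
so by induction on `ℓ` every `n ↦ s (2^ℓ n + r)` with `0 ≤ r ≤ 2^ℓ` lies in the additive monoid
generated by `s` and `n ↦ s (n + 1)`. Allowing `r = 2^ℓ` is what makes the odd case close.
-/

section

variable {M : Type*} {s : ℕ → M}

theorem kernel_succ_two_mul (heven : ∀ n, s (2 * n) = s n) (ℓ r n : ℕ) :
    s (2 ^ (ℓ + 1) * n + 2 * r) = s (2 ^ ℓ * n + r) := by
  rw [← heven (2 ^ ℓ * n + r), pow_succ]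
  ring_nf

theorem kernel_succ_two_mul_add_one [AddCommMonoid M]
    (hodd : ∀ n, s (2 * n + 1) = s n + s (n + 1)) (ℓ r n : ℕ) :
    s (2 ^ (ℓ + 1) * n + (2 * r + 1)) = s (2 ^ ℓ * n + r) + s (2 ^ ℓ * n + (r + 1)) := by
  rw [← add_assoc (2 ^ ℓ * n), ← hodd (2 ^ ℓ * n + r), pow_succ]
  ring_nf

theorem exists_kernel_eq_nsmul_add_nsmul [AddCommMonoid M] (heven : ∀ n, s (2 * n) = s n)
    (hodd : ∀ n, s (2 * n + 1) = s n + s (n + 1)) (ℓ : ℕ) :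
    ∀ r ≤ 2 ^ ℓ, ∃ a b : ℕ, ∀ n, s (2 ^ ℓ * n + r) = a • s n + b • s (n + 1) := by
  induction ℓ with
  | zero =>
    intro r hr
    interval_cases r
    · exact ⟨1, 0, fun n => by simp⟩
    · exact ⟨0, 1, fun n => by simp⟩
  | succ ℓ ih =>
    intro r hr
    rw [pow_succ] at hr
    obtain ⟨r, rfl | rfl⟩ := Nat.even_or_odd' r
    · obtain ⟨a, b, hab⟩ := ih r (by omega)
      exact ⟨a, b, fun n => by rw [kernel_succ_two_mul heven, hab]⟩
    · obtain ⟨a, b, hab⟩ := ih r (by omega)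
      obtain ⟨c, d, hcd⟩ := ih (r + 1) (by omega)
      refine ⟨a + c, b + d, fun n => ?_⟩
      rw [kernel_succ_two_mul_add_one hodd, hab, hcd, add_nsmul, add_nsmul]
      abel

end

theorem stern_kernel_linear_combination_general (s : ℕ → ℕ)
    (h0 : s 0 = 0)
    (heven : ∀ n, 1 ≤ n → s (2 * n) = s n)
    (hodd : ∀ n, 1 ≤ n → s (2 * n + 1) = s n + s (n + 1)) :
    ∀ ℓ r : ℕ, r < 2 ^ ℓ →
      ∃ a b : ℕ, ∀ n, s (2 ^ ℓ * n + r) = a * s n + b * s (n + 1) := by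
  have heven' : ∀ n, s (2 * n) = s n := by
    rintro (_ | n)
    · rfl
    · exact heven _ n.succ_pos
  have hodd' : ∀ n, s (2 * n + 1) = s n + s (n + 1) := by
    rintro (_ | n)
    · simp [h0]
    · exact hodd _ n.succ_pos
  intro ℓ r hr
  simpa only [smul_eq_mul] using exists_kernel_eq_nsmul_add_nsmul heven' hodd' ℓ r hr.le

/-- Every element of the 2-kernel of Stern's diatomic sequence is a nonnegative
integer linear combination of `(s n)` and `(s (n+1))`. -/
theorem stern_kernel_linear_combination (s : ℕ → ℕ)
    (h0 : s 0 = 0) (h1 : s 1 = 1)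
    (heven : ∀ n, 1 ≤ n → s (2 * n) = s n)
    (hodd : ∀ n, 1 ≤ n → s (2 * n + 1) = s n + s (n + 1)) :
    ∀ ℓ r : ℕ, r < 2 ^ ℓ →
      ∃ a b : ℕ, ∀ n, s (2 ^ ℓ * n + r) = a * s n + b * s (n + 1) :=
  stern_kernel_linear_combination_general s h0 heven hodd
end

section
/- Let (Sₙ)_{n≥1} be a sequence of d×d complex-matrix-valued continuous functions on ℝ such that each Sₙ(0) is a Markov (row-stochastic) matrix, ‖Sₙ(t)‖_∞ ≤ 1 for all t, and there exist δ > 0 and a summable sequence (εₙ) with ‖Sₙ(t) - Sₙ(0)‖_∞ ≤ εₙ whenever |t| < δ. Then the partial products S^{(m)}(t) = S_m(t/k^m)⋯S₁(t/k) (for fixed k ≥ 2) satisfy: the family {S^{(m,ℓ)}(t)}, with S^{(m,ℓ)}(t) = S_m(t/k^m)⋯S_ℓ(t/k^ℓ), is equicontinuous at t = 0, with ‖S^{(m,ℓ)}(t) - S^{(m,ℓ)}(0)‖_∞ ≤ Σ_{j≥0} ε_{j+1} whenever |t| < δ. -/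
open scoped BigOperators

/-- The maximum-row-sum norm `‖A‖_∞` of a complex matrix. -/
noncomputable def matrixInfNorm {d : ℕ} (A : Matrix (Fin d) (Fin d) ℂ) : ℝ :=
  ⨆ i : Fin d, ∑ j, ‖A i j‖

/-- A complex matrix is Markov if its entries are nonnegative reals and each
row sums to `1`. -/
def IsMarkovC {d : ℕ} (A : Matrix (Fin d) (Fin d) ℂ) : Prop :=
  (∀ i j, (A i j).im = 0 ∧ 0 ≤ (A i j).re) ∧ ∀ i, ∑ j, A i j = 1

/-- The (descending) partial product `S^{(m,ℓ)}(t) = S_m(t/k^m) ⋯ S_ℓ(t/k^ℓ)`. -/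
noncomputable def partialProd {d : ℕ} (S : ℕ → ℝ → Matrix (Fin d) (Fin d) ℂ)
    (k : ℕ) (m ℓ : ℕ) (t : ℝ) : Matrix (Fin d) (Fin d) ℂ :=
  (List.ofFn (fun r : Fin (m - ℓ + 1) => S (m - (r : ℕ)) (t / (k : ℝ) ^ (m - (r : ℕ))))).prod

/-!
The factors have norm at most `1`, so telescoping in a normed ring gives
`‖A₁⋯Aₙ - B₁⋯Bₙ‖ ≤ ∑ ‖Aᵢ - Bᵢ‖`. As `|t / kⁿ| ≤ |t| < δ`, the factor `Sₙ` moves by at most `εₙ`,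
and the indices `ℓ, …, m` of `S^{(m,ℓ)}` are distinct and positive, so the sum is dominated by
`∑_{j ≥ 0} ε_{j+1}`.
-/

section Telescoping

variable {R : Type*} [SeminormedRing R]

theorem norm_prod_ofFn_le_one {n : ℕ} (A : Fin (n + 1) → R) (hA : ∀ i, ‖A i‖ ≤ 1) :
    ‖(List.ofFn A).prod‖ ≤ 1 := by
  refine (List.norm_prod_le' (by simp)).trans ?_
  rw [List.map_ofFn, List.prod_ofFn]
  exact Finset.prod_le_one (fun _ _ => norm_nonneg _) fun i _ => hA i

theorem norm_prod_ofFn_sub_prod_ofFn_le {n : ℕ} (A B : Fin (n + 1) → R)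
    (hA : ∀ i, ‖A i‖ ≤ 1) (hB : ∀ i, ‖B i‖ ≤ 1) :
    ‖(List.ofFn A).prod - (List.ofFn B).prod‖ ≤ ∑ i, ‖A i - B i‖ := by
  induction n with
  | zero => simp
  | succ n ih =>
    rw [List.ofFn_succ (f := A), List.ofFn_succ (f := B), List.prod_cons, List.prod_cons]
    set P := (List.ofFn fun i => A i.succ).prod
    set Q := (List.ofFn fun i => B i.succ).prod
    have hQ : ‖Q‖ ≤ 1 := norm_prod_ofFn_le_one _ fun i => hB i.succ
    calc ‖A 0 * P - B 0 * Q‖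
        = ‖A 0 * (P - Q) + (A 0 - B 0) * Q‖ := by noncomm_ring
      _ ≤ ‖A 0‖ * ‖P - Q‖ + ‖A 0 - B 0‖ * ‖Q‖ :=
          (norm_add_le _ _).trans (add_le_add (norm_mul_le _ _) (norm_mul_le _ _))
      _ ≤ ‖P - Q‖ + ‖A 0 - B 0‖ := by
          gcongr
          · exact mul_le_of_le_one_left (norm_nonneg _) (hA 0)
          · exact mul_le_of_le_one_right (norm_nonneg _) hQ
      _ ≤ ∑ i : Fin (n + 1), ‖A i.succ - B i.succ‖ + ‖A 0 - B 0‖ := by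
          gcongr; exact ih _ _ (fun i => hA _) (fun i => hB _)
      _ = ∑ i, ‖A i - B i‖ := by rw [Fin.sum_univ_succ (fun i => ‖A i - B i‖), add_comm]

end Telescoping

theorem Summable.sum_fin_sub_le_tsum_succ {ε : ℕ → ℝ} (hε : Summable ε) (hε0 : ∀ n, 0 ≤ ε n)
    {m ℓ : ℕ} (hℓ : 1 ≤ ℓ) (hℓm : ℓ ≤ m) :
    ∑ r : Fin (m - ℓ + 1), ε (m - r) ≤ ∑' j, ε (j + 1) := by
  have hinj : Function.Injective fun r : Fin (m - ℓ + 1) => m - r - 1 := by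
    intro r s h; ext; have := r.isLt; have := s.isLt; simp only at h; omega
  calc ∑ r : Fin (m - ℓ + 1), ε (m - r)
      = ∑' r : Fin (m - ℓ + 1), ε (m - r - 1 + 1) := by
        rw [tsum_fintype]; refine Finset.sum_congr rfl fun r _ => ?_
        congr; have := r.isLt; omega
    _ ≤ ∑' j, ε (j + 1) :=
        tsum_comp_le_tsum_of_inj ((summable_nat_add_iff 1).mpr hε) (fun _ => hε0 _) hinj

theorem matrixInfNorm_nonneg {d : ℕ} (A : Matrix (Fin d) (Fin d) ℂ) : 0 ≤ matrixInfNorm A :=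
  Real.iSup_nonneg fun _ => Finset.sum_nonneg fun _ _ => norm_nonneg _

section LinftyOpNorm

attribute [local instance] Matrix.linftyOpNormedRing

theorem matrixInfNorm_eq_norm {d : ℕ} (A : Matrix (Fin d) (Fin d) ℂ) :
    matrixInfNorm A = ‖A‖ := by
  rw [Matrix.linfty_opNorm_def, Finset.sup_univ_eq_ciSup, NNReal.coe_iSup, matrixInfNorm]
  simp [NNReal.coe_sum]

theorem matrixInfNorm_partialProd_sub_le {d : ℕ} (S : ℕ → ℝ → Matrix (Fin d) (Fin d) ℂ)
    (hnorm : ∀ n t, matrixInfNorm (S n t) ≤ 1) (k m ℓ : ℕ) (t : ℝ) :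
    matrixInfNorm (partialProd S k m ℓ t - partialProd S k m ℓ 0) ≤
      ∑ r : Fin (m - ℓ + 1),
        matrixInfNorm (S (m - r) (t / (k : ℝ) ^ (m - r)) - S (m - r) 0) := by
  simp only [matrixInfNorm_eq_norm] at hnorm ⊢
  simpa only [partialProd, zero_div] using
    norm_prod_ofFn_sub_prod_ofFn_le _ _ (fun _ => hnorm _ _) (fun _ => hnorm _ _)

end LinftyOpNorm

theorem partial_products_equicontinuous_general {d k : ℕ} (hk : 2 ≤ k)
    (S : ℕ → ℝ → Matrix (Fin d) (Fin d) ℂ)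
    (hnorm : ∀ n t, matrixInfNorm (S n t) ≤ 1)
    (δ : ℝ) (ε : ℕ → ℝ) (hε : Summable ε)
    (hclose : ∀ n : ℕ, ∀ t : ℝ, |t| < δ → matrixInfNorm (S n t - S n 0) ≤ ε n) :
    ∀ m ℓ : ℕ, 1 ≤ ℓ → ℓ ≤ m → ∀ t : ℝ, |t| < δ →
      matrixInfNorm (partialProd S k m ℓ t - partialProd S k m ℓ 0)
        ≤ ∑' j : ℕ, ε (j + 1) := by
  intro m ℓ hℓ hℓm t ht
  have hε0 : ∀ n, 0 ≤ ε n := fun n =>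
    (matrixInfNorm_nonneg _).trans (hclose n 0 (by simpa using (abs_nonneg t).trans_lt ht))
  have hscaled : ∀ n : ℕ, |t / (k : ℝ) ^ n| < δ := fun n => by
    refine lt_of_le_of_lt ?_ ht
    rw [abs_div, abs_pow, Nat.abs_cast]
    exact div_le_self (abs_nonneg t) (one_le_pow₀ (by norm_cast; omega))
  calc matrixInfNorm (partialProd S k m ℓ t - partialProd S k m ℓ 0)
      ≤ ∑ r : Fin (m - ℓ + 1),
          matrixInfNorm (S (m - r) (t / (k : ℝ) ^ (m - r)) - S (m - r) 0) :=
        matrixInfNorm_partialProd_sub_le S hnorm k m ℓ t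
    _ ≤ ∑ r : Fin (m - ℓ + 1), ε (m - r) :=
        Finset.sum_le_sum fun _ _ => hclose _ _ (hscaled _)
    _ ≤ ∑' j, ε (j + 1) := hε.sum_fin_sub_le_tsum_succ hε0 hℓ hℓm

/-- Equicontinuity at `t = 0` of the partial products `S^{(m,ℓ)}`: if each
`Sₙ(0)` is Markov, `‖Sₙ(t)‖_∞ ≤ 1` everywhere, and `‖Sₙ(t) − Sₙ(0)‖_∞ ≤ εₙ`
for `|t| < δ` with `(εₙ)` summable, then
`‖S^{(m,ℓ)}(t) − S^{(m,ℓ)}(0)‖_∞ ≤ Σ_{j≥0} ε_{j+1}` for `|t| < δ`. -/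
theorem partial_products_equicontinuous {d k : ℕ} (hk : 2 ≤ k)
    (S : ℕ → ℝ → Matrix (Fin d) (Fin d) ℂ)
    (hcont : ∀ n, Continuous (S n))
    (hMarkov : ∀ n, IsMarkovC (S n 0))
    (hnorm : ∀ n t, matrixInfNorm (S n t) ≤ 1)
    (δ : ℝ) (hδ : 0 < δ) (ε : ℕ → ℝ) (hε : Summable ε)
    (hclose : ∀ n : ℕ, ∀ t : ℝ, |t| < δ → matrixInfNorm (S n t - S n 0) ≤ ε n) :
    ∀ m ℓ : ℕ, 1 ≤ ℓ → ℓ ≤ m → ∀ t : ℝ, |t| < δ →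
      matrixInfNorm (partialProd S k m ℓ t - partialProd S k m ℓ 0)
        ≤ ∑' j : ℕ, ε (j + 1) :=
  partial_products_equicontinuous_general hk S hnorm δ ε hε hclose
end

section
/- With D and Σ_D as above, Σ_{m=2^n}^{2^n + 2^{n-1} - 1} D(m) = Σ_D(n-1) for all n ≥ 1. Consequently μ_{D,n}([0,1/2)) = Σ_D(n-1)/Σ_D(n). -/
open Finset

/-- The digit matrix `B₁` of Dumas' sequence. -/
def DumasB1 : Matrix (Fin 2) (Fin 2) ℤ := !![3, -3; 3, 3]

/-- Dumas' 2-regular sequence `D m = e₁ᵀ B₁^{s₂ m} e₁`. -/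
def DumasD (m : ℕ) : ℤ := (DumasB1 ^ ((Nat.digits 2 m).sum)) 0 0

/-- Sum of Dumas' sequence over the fundamental region `[2^n, 2^{n+1})`. -/
def DumasSigma (n : ℕ) : ℤ := ∑ m ∈ Finset.Ico (2 ^ n) (2 ^ (n + 1)), DumasD m

/-! Since `B₀ = 1`, `D m` only depends on the binary digit sum of `m`. Prepending a leading
digit `1` to a number `r < 2^k` raises that digit sum by one, whether the new digit sits at
position `k` or `k + 1`; hence `m ↦ m + 2^k` maps `[2^k, 2^k + 2^k)` onto the first half
`[2^(k+1), 2^(k+1) + 2^k)` of the next fundamental region without changing `D`. -/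

theorem Nat.digits_sum_add_base_pow_mul {b j r a : ℕ} (hb : 1 < b) (hr : r < b ^ j) :
    (Nat.digits b (r + b ^ j * a)).sum = (Nat.digits b r).sum + (Nat.digits b a).sum := by
  rcases Nat.eq_zero_or_pos a with rfl | ha
  · simp
  have hlen : (Nat.digits b r).length ≤ j := (Nat.digits_length_le_iff hb r).2 hr
  have hsplit := Nat.digits_append_zeroes_append_digits (n := r) (k := j - (Nat.digits b r).length) hb ha
  rw [Nat.add_sub_cancel' hlen] at hsplit
  simp [← hsplit]

theorem Nat.digits_two_sum_two_pow_add {j r : ℕ} (hr : r < 2 ^ j) :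
    (Nat.digits 2 (2 ^ j + r)).sum = (Nat.digits 2 r).sum + 1 := by
  simpa [add_comm] using Nat.digits_sum_add_base_pow_mul (a := 1) (le_refl 2) hr

theorem DumasD_two_pow_succ_add {k r : ℕ} (hr : r < 2 ^ k) :
    DumasD (2 ^ (k + 1) + r) = DumasD (2 ^ k + r) := by
  have hr' : r < 2 ^ (k + 1) := hr.trans (Nat.pow_lt_pow_right (by norm_num) k.lt_succ_self)
  simp only [DumasD, Nat.digits_two_sum_two_pow_add hr, Nat.digits_two_sum_two_pow_add hr']

theorem sum_DumasD_first_half (n : ℕ) :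
    ∑ m ∈ Ico (2 ^ n) (2 ^ n + 2 ^ (n - 1)), DumasD m = DumasSigma (n - 1) := by
  cases n with
  | zero => rfl
  | succ k =>
    have hwidth : 2 ^ (k + 1) - 2 ^ k = 2 ^ k := by rw [pow_succ]; omega
    rw [DumasSigma, sum_Ico_eq_sum_range, sum_Ico_eq_sum_range, Nat.add_sub_cancel_left,
      Nat.add_sub_cancel, hwidth]
    exact sum_congr rfl fun r hr => DumasD_two_pow_succ_add (mem_range.1 hr)

theorem dumas_half_mass_general (n : ℕ) :
    (∑ m ∈ Finset.Ico (2 ^ n) (2 ^ n + 2 ^ (n - 1)), DumasD m) = DumasSigma (n - 1) ∧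
    (1 / (DumasSigma n : ℝ)) *
        (∑ m ∈ Finset.Ico (2 ^ n) (2 ^ n + 2 ^ (n - 1)), (DumasD m : ℝ))
      = (DumasSigma (n - 1) : ℝ) / (DumasSigma n : ℝ) := by
  have hhalf := sum_DumasD_first_half n
  have hhalf_real : ∑ m ∈ Ico (2 ^ n) (2 ^ n + 2 ^ (n - 1)), (DumasD m : ℝ)
      = DumasSigma (n - 1) := by
    exact_mod_cast hhalf
  exact ⟨hhalf, by rw [hhalf_real, one_div_mul_eq_div]⟩

/-- The sum of Dumas' sequence over the first half of the fundamental region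
equals `Σ_D(n-1)`; consequently the mass that the approximant measure
`μ_{D,n}` assigns to `[0, 1/2)` equals `Σ_D(n-1)/Σ_D(n)`. -/
theorem dumas_half_mass (n : ℕ) (hn : 1 ≤ n) (hS : DumasSigma n ≠ 0) :
    (∑ m ∈ Finset.Ico (2 ^ n) (2 ^ n + 2 ^ (n - 1)), DumasD m) = DumasSigma (n - 1) ∧
    (1 / (DumasSigma n : ℝ)) *
        (∑ m ∈ Finset.Ico (2 ^ n) (2 ^ n + 2 ^ (n - 1)), (DumasD m : ℝ))
      = (DumasSigma (n - 1) : ℝ) / (DumasSigma n : ℝ) :=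
  dumas_half_mass_general n
end

section
/- The angle θ = arccos(4/5) is an irrational multiple of π; equivalently, (4+3i)/5 is not a root of unity. -/
/-!
If `arccos (4/5)` were a rational multiple of `π`, then `cos` would take the rational value `4/5`
at a rational multiple of `π`, which Niven's theorem forbids (`2 cos (rπ)` is an algebraic
integer, so a rational value of it is one of `0, ±1, ±2`). Since `(4 + 3i)/5 = exp (i arccos (4/5))`,
a relation `((4 + 3i)/5)^n = 1` would make `n arccos (4/5)` a multiple of `2π`.
-/

open Complex

open Real in
lemma Complex.exists_rat_mul_pi_of_exp_mul_I_pow_eq_one {θ : ℝ} {n : ℕ} (hn : 0 < n)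
    (h : exp (θ * I) ^ n = 1) : ∃ q : ℚ, θ = q * π := by
  rw [← exp_nat_mul, exp_eq_one_iff] at h
  obtain ⟨k, hk⟩ := h
  refine ⟨2 * k / n, ?_⟩
  have hk' : (n : ℝ) * θ = k * (2 * π) := by
    apply ofReal_injective
    apply mul_right_cancel₀ I_ne_zero
    push_cast
    linear_combination hk
  push_cast
  field_simp
  linarith

lemma Real.not_exists_rat_mul_pi_eq_arccos_four_fifths :
    ¬ ∃ q : ℚ, Real.arccos (4 / 5) = q * Real.pi := by
  intro hrat
  have hcos : Real.cos (Real.arccos (4 / 5)) = 4 / 5 := Real.cos_arccos (by norm_num) (by norm_num)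
  have hniven := niven hrat ⟨4 / 5, by rw [hcos]; push_cast; rfl⟩
  rw [hcos] at hniven
  norm_num at hniven

lemma Complex.four_add_three_mul_I_div_five_eq_exp :
    (4 + 3 * I) / 5 = exp (Real.arccos (4 / 5) * I) := by
  rw [exp_mul_I, ← ofReal_cos, ← ofReal_sin, Real.cos_arccos (by norm_num) (by norm_num),
    Real.sin_arccos, show (1 : ℝ) - (4 / 5) ^ 2 = (3 / 5) ^ 2 by norm_num,
    Real.sqrt_sq (by norm_num)]
  push_cast
  ring

/-- The angle `θ = arccos (4/5)` is an irrational multiple of `π`;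
equivalently, `(4+3i)/5` is not a root of unity. -/
theorem arccos_four_fifths_irrational_multiple_of_pi :
    (∀ q : ℚ, Real.arccos (4 / 5) ≠ (q : ℝ) * Real.pi) ∧
    (∀ n : ℕ, 0 < n → ((4 + 3 * I) / 5) ^ n ≠ 1) := by
  refine ⟨fun q hq => Real.not_exists_rat_mul_pi_eq_arccos_four_fifths ⟨q, hq⟩, fun n hn h => ?_⟩
  rw [four_add_three_mul_I_div_five_eq_exp] at h
  exact Real.not_exists_rat_mul_pi_eq_arccos_four_fifths
    (exists_rat_mul_pi_of_exp_mul_I_pow_eq_one hn h)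
end

section
/- Let A be a d×d row-stochastic matrix with all entries strictly positive (a primitive Markov matrix). Then Aⁿ converges as n → ∞ to a rank-one row-stochastic matrix P whose rows are all equal to the unique stationary distribution π of A; moreover P·M = M for any matrix M satisfying A·M = M. -/
/-! Doeblin's contraction argument. If every entry of the stochastic matrix `A` is at least
`ε > 0`, then for every vector `x` the minimum of `A x` is at least the minimum of `x`, while
the maximum of `A x` is at most `max x - ε (max x - min x)`. Along `x, A x, A² x, …` the minima
therefore increase and the maxima decrease to a common limit, so `Aᵏ x` tends to a constant
vector; on the basis vectors this says `Aᵏ → 1 πᵀ`. The limit is stochastic because stochastic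
matrices form a closed set, and stationarity, uniqueness of `π` and `P M = M` come from passing
to the limit in `Aᵏ⁺¹ = Aᵏ A`, `π' Aᵏ = π'` and `Aᵏ M = M`. -/

open Filter Topology Matrix

section PowLimit

variable {M : Type*} [Monoid M] [TopologicalSpace M] [ContinuousMul M] [T2Space M] {a b p : M}

theorem mul_eq_self_of_tendsto_pow (h : Tendsto (a ^ ·) atTop (𝓝 p)) : p * a = p :=
  isFixedPt_of_tendsto_iterate (x := 1) (by simpa only [mul_right_iterate_apply_one] using h)
    (continuous_mul_const a).continuousAt

theorem mul_eq_of_tendsto_pow (h : Tendsto (a ^ ·) atTop (𝓝 p)) (hb : a * b = b) :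
    p * b = b := by
  have hpow (k : ℕ) : a ^ k * b = b := by
    simpa only [Function.IsFixedPt, mul_left_iterate_apply] using
      Function.IsFixedPt.iterate (f := (a * ·)) hb k
  exact tendsto_nhds_unique ((h.mul_const b).congr hpow) tendsto_const_nhds

theorem mul_eq_of_tendsto_pow' (h : Tendsto (a ^ ·) atTop (𝓝 p)) (hb : b * a = b) :
    b * p = b := by
  have hpow (k : ℕ) : b * a ^ k = b := by
    simpa only [Function.IsFixedPt, mul_right_iterate_apply] using
      Function.IsFixedPt.iterate (f := (· * a)) hb k
  exact tendsto_nhds_unique ((h.const_mul b).congr hpow) tendsto_const_nhds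

end PowLimit

theorem exists_tendsto_of_monotone_of_le_sub_mul {m M : ℕ → ℝ} {ε : ℝ} (hε : 0 < ε)
    (hm : Monotone m) (hmM : ∀ k, m k ≤ M k) (hM : ∀ k, M (k + 1) ≤ M k - ε * (M k - m k)) :
    ∃ L, Tendsto m atTop (𝓝 L) ∧ Tendsto M atTop (𝓝 L) := by
  have hM' : Antitone M := antitone_nat_of_succ_le fun k => by nlinarith [hmM k, hM k]
  obtain ⟨L, hmL⟩ : ∃ L, Tendsto m atTop (𝓝 L) :=
    ⟨_, tendsto_atTop_ciSup hm ⟨M 0, by rintro _ ⟨k, rfl⟩; exact (hmM k).trans (hM' k.zero_le)⟩⟩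
  obtain ⟨L', hML⟩ : ∃ L', Tendsto M atTop (𝓝 L') :=
    ⟨_, tendsto_atTop_ciInf hM' ⟨m 0, by rintro _ ⟨k, rfl⟩; exact (hm k.zero_le).trans (hmM k)⟩⟩
  have hle : L ≤ L' := le_of_tendsto_of_tendsto' hmL hML hmM
  have hge : L' ≤ L' - ε * (L' - L) :=
    le_of_tendsto_of_tendsto' (hML.comp (tendsto_add_atTop_nat 1))
      (hML.sub ((hML.sub hmL).const_mul ε)) hM
  obtain rfl : L = L' := le_antisymm hle (by nlinarith)
  exact ⟨L, hmL, hML⟩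

namespace Matrix

variable {n : Type*} [Fintype n]

theorem vecMul_replicateRow {R : Type*} [NonUnitalNonAssocSemiring R] (v w : n → R) :
    v ᵥ* replicateRow n w = (∑ i, v i) • w := by
  ext j
  simp [vecMul, dotProduct, Finset.sum_mul]

variable [DecidableEq n]

section Topological

variable {R : Type*} [Semiring R] [TopologicalSpace R]

theorem isClosed_rowStochastic [PartialOrder R] [IsOrderedRing R] [OrderClosedTopology R]
    [IsTopologicalSemiring R] : IsClosed (rowStochastic R n : Set (Matrix n n R)) := by
  show IsClosed {M : Matrix n n R | (∀ i j, 0 ≤ M i j) ∧ M *ᵥ 1 = 1}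
  simp only [Set.ofPred_and, Set.ofPred_forall]
  exact (isClosed_iInter fun i => isClosed_iInter fun j =>
      isClosed_le continuous_const (continuous_id.matrix_elem i j)).inter
    (isClosed_eq (continuous_id.matrix_mulVec continuous_const) continuous_const)

theorem vecMul_eq_of_tendsto_pow [IsTopologicalSemiring R] [T2Space R] [Nonempty n]
    {A P : Matrix n n R} (h : Tendsto (A ^ ·) atTop (𝓝 P)) {v : n → R} (hv : v ᵥ* A = v) :
    v ᵥ* P = v :=
  replicateRow_injective (ι := n) <| by
    rw [replicateRow_vecMul, mul_eq_of_tendsto_pow' h (by rw [← replicateRow_vecMul, hv])]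

end Topological

variable {A : Matrix n n ℝ}

theorem le_mulVec_apply (hA : A ∈ rowStochastic ℝ n) {a : ℝ} {x : n → ℝ} (hx : ∀ j, a ≤ x j)
    (i : n) : a ≤ (A *ᵥ x) i := by
  have hsum : (A *ᵥ x) i - a = ∑ j, A i j * (x j - a) := by
    simp [mulVec, dotProduct, mul_sub, Finset.sum_sub_distrib, ← Finset.sum_mul,
      sum_row_of_mem_rowStochastic hA i]
  have := Finset.sum_nonneg fun j (_ : j ∈ Finset.univ) =>
    mul_nonneg (hA.1 i j) (sub_nonneg.2 (hx j))
  linarith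

theorem mulVec_apply_le_sub (hA : A ∈ rowStochastic ℝ n) {ε b : ℝ} (hε : ∀ i j, ε ≤ A i j)
    {x : n → ℝ} (hx : ∀ j, x j ≤ b) (i k : n) : (A *ᵥ x) i ≤ b - ε * (b - x k) := by
  have hsum : b - (A *ᵥ x) i = ∑ j, A i j * (b - x j) := by
    simp [mulVec, dotProduct, mul_sub, Finset.sum_sub_distrib, ← Finset.sum_mul,
      sum_row_of_mem_rowStochastic hA i]
  have hk : A i k * (b - x k) ≤ ∑ j, A i j * (b - x j) :=
    Finset.single_le_sum (fun j _ => mul_nonneg (hA.1 i j) (sub_nonneg.2 (hx j)))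
      (Finset.mem_univ k)
  nlinarith [mul_le_mul_of_nonneg_right (hε i k) (sub_nonneg.2 (hx k))]

variable [Nonempty n]

theorem iInf_le_iInf_mulVec (hA : A ∈ rowStochastic ℝ n) (x : n → ℝ) :
    ⨅ i, x i ≤ ⨅ i, (A *ᵥ x) i :=
  le_ciInf (le_mulVec_apply hA (Finite.ciInf_le x))

theorem iSup_mulVec_le (hA : A ∈ rowStochastic ℝ n) {ε : ℝ} (hε : ∀ i j, ε ≤ A i j)
    (x : n → ℝ) : ⨆ i, (A *ᵥ x) i ≤ (⨆ i, x i) - ε * ((⨆ i, x i) - ⨅ i, x i) := by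
  obtain ⟨k, hk⟩ := exists_eq_ciInf_of_finite (f := x)
  exact ciSup_le fun i => hk ▸ mulVec_apply_le_sub hA hε (Finite.le_ciSup x) i k

theorem exists_tendsto_pow_mulVec_const (hA : A ∈ rowStochastic ℝ n) (hpos : ∀ i j, 0 < A i j)
    (x : n → ℝ) : ∃ c, Tendsto (fun k => A ^ k *ᵥ x) atTop (𝓝 fun _ => c) := by
  obtain ⟨⟨i₀, j₀⟩, hmin⟩ := Finite.exists_min fun p : n × n => A p.1 p.2
  set y := fun k => A ^ k *ᵥ x
  have hy (k : ℕ) : y (k + 1) = A *ᵥ y k := by simp only [y, pow_succ', mulVec_mulVec]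
  obtain ⟨c, hinf, hsup⟩ := exists_tendsto_of_monotone_of_le_sub_mul (hpos i₀ j₀)
    (m := fun k => ⨅ i, y k i) (M := fun k => ⨆ i, y k i)
    (monotone_nat_of_le_succ fun k => (hy k).symm ▸ iInf_le_iInf_mulVec hA (y k))
    (fun k => (Finite.ciInf_le _ (Classical.arbitrary n)).trans (Finite.le_ciSup _ _))
    (fun k => (hy k).symm ▸ iSup_mulVec_le hA (fun i j => hmin (i, j)) (y k))
  exact ⟨c, tendsto_pi_nhds.2 fun i => tendsto_of_tendsto_of_tendsto_of_le_of_le hinf hsup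
    (fun k => Finite.ciInf_le _ i) (fun k => Finite.le_ciSup _ i)⟩

theorem exists_tendsto_pow_replicateRow (hA : A ∈ rowStochastic ℝ n) (hpos : ∀ i j, 0 < A i j) :
    ∃ π : n → ℝ, Tendsto (A ^ ·) atTop (𝓝 (replicateRow n π)) := by
  choose π hπ using fun j => exists_tendsto_pow_mulVec_const hA hpos (Pi.single j 1)
  refine ⟨π, tendsto_pi_nhds.2 fun i => tendsto_pi_nhds.2 fun j => ?_⟩
  simpa [mulVec_single_one] using tendsto_pi_nhds.1 (hπ j) i

end Matrix

/-- For a strictly positive row-stochastic matrix `A`, the powers `Aⁿ` converge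
to the rank-one stochastic matrix `P` whose rows all equal the unique
stationary distribution `π` of `A`; moreover `P M = M` whenever `A M = M`. -/
theorem primitive_markov_power_limit {d : ℕ} [NeZero d]
    (A : Matrix (Fin d) (Fin d) ℝ)
    (hpos : ∀ i j, 0 < A i j)
    (hrow : ∀ i, ∑ j, A i j = 1) :
    ∃ π : Fin d → ℝ,
      (∀ j, 0 ≤ π j) ∧ (∑ j, π j = 1) ∧
      Matrix.vecMul π A = π ∧
      (∀ π' : Fin d → ℝ, (∀ j, 0 ≤ π' j) → (∑ j, π' j = 1) →
        Matrix.vecMul π' A = π' → π' = π) ∧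
      Tendsto (fun n : ℕ => A ^ n) atTop
        (nhds (Matrix.of fun (_ j : Fin d) => π j)) ∧
      (∀ M : Matrix (Fin d) (Fin d) ℝ, A * M = M →
        (Matrix.of fun (_ j : Fin d) => π j) * M = M) := by
  have hA : A ∈ rowStochastic ℝ (Fin d) :=
    mem_rowStochastic_iff_sum.2 ⟨fun i j => (hpos i j).le, hrow⟩
  obtain ⟨π, hlim⟩ := exists_tendsto_pow_replicateRow hA hpos
  have hP : replicateRow (Fin d) π ∈ rowStochastic ℝ (Fin d) :=
    isClosed_rowStochastic.mem_of_tendsto hlim (Eventually.of_forall (pow_mem hA))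
  have hstat : π ᵥ* A = π :=
    replicateRow_injective (by rw [replicateRow_vecMul]; exact mul_eq_self_of_tendsto_pow hlim)
  refine ⟨π, fun j => hP.1 0 j, sum_row_of_mem_rowStochastic hP 0, hstat,
    fun π' _ hπ' hfix => ?_, hlim, fun M hM => mul_eq_of_tendsto_pow hlim hM⟩
  have := vecMul_eq_of_tendsto_pow hlim hfix
  rwa [vecMul_replicateRow, hπ', one_smul, eq_comm] at this
end

section
/- Let μₙ,ᵢ (1 ≤ i ≤ d, n ≥ 0) be the pure point measures μₙ,ᵢ = (1/Σᵢ(n)) Σ_{m=0}^{k^{n+1}-k^n-1} fᵢ(k^n+m) δ_{m/(k^n(k-1))} on the circle 𝕋, where fᵢ satisfies the digit recursion 𝐟(km+a) = B_a 𝐟(m) and Σᵢ(n) = Σ_{m=k^n}^{k^{n+1}-1} fᵢ(m) ≠ 0. Then the vector 𝛍ₙ = (μₙ,₁,…,μₙ,_d)ᵀ satisfies the renormalisation identity 𝛍ₙ = Aₙ(δ_{1/(k^n(k-1))}) 𝛍ₙ₋₁ for n ≥ 1, where Aₙ(z) is the matrix with (i,j)-entry (Σⱼ(n-1)/Σᵢ(n))·b_{ij}(z),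 b_{ij}(z) being the (i,j)-entry of B(z) = Σ_a B_a z^a, and polynomials are evaluated on Dirac measures via convolution powers (δ_x)^r = δ_{rx}. -/
/-!
Write the index of an atom of `μₙ` as `k m + a` with a digit `a < k`. The digit recursion turns its
weight `fᵢ(k^n + k m + a)` into `Σⱼ (B_a)ᵢⱼ fⱼ(k^(n-1) + m)`, and its position
`(k m + a)/(k^n (k-1))` is the position `m/(k^(n-1) (k-1))` of an atom of `μₙ₋₁` translated by
`a/(k^n (k-1))`, which is what convolution with `δ_{a/(k^n(k-1))}` does. So the unnormalised
combs satisfy the identity with the matrix `B(δ)` itself, and the factors `Σⱼ(n-1)/Σᵢ(n)` of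
`Aₙ` only convert between the normalisations.
-/

open MeasureTheory Finset

/-- The fundamental-region sums `Σᵢ(n) = Σ_{m=k^n}^{k^{n+1}-1} fᵢ(m)`. -/
noncomputable def regSigma {d : ℕ} (k : ℕ) (f : ℕ → Fin d → NNReal)
    (i : Fin d) (n : ℕ) : NNReal :=
  ∑ m ∈ Finset.Ico (k ^ n) (k ^ (n + 1)), f m i

/-- The pure point approximant measures
`μₙ,ᵢ = Σᵢ(n)⁻¹ Σ_{m=0}^{k^{n+1}-k^n-1} fᵢ(k^n+m) δ_{m/(k^n(k-1))}` on the
circle `𝕋 = ℝ/ℤ`. -/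
noncomputable def regMeasure {d : ℕ} (k : ℕ) (f : ℕ → Fin d → NNReal)
    (n : ℕ) (i : Fin d) : Measure (AddCircle (1 : ℝ)) :=
  (regSigma k f i n)⁻¹ •
    ∑ m ∈ Finset.range (k ^ (n + 1) - k ^ n),
      f (k ^ n + m) i •
        Measure.dirac (((m : ℝ) / ((k : ℝ) ^ n * ((k : ℝ) - 1)) : ℝ) : AddCircle (1 : ℝ))

theorem Finset.sum_range_mul_eq_sum_sum_fin {M : Type*} [AddCommMonoid M] (g : ℕ → M)
    (N k : ℕ) :
    ∑ m ∈ range (N * k), g m = ∑ m ∈ range N, ∑ a : Fin k, g (k * m + a) := by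
  induction N with
  | zero => simp
  | succ N ih =>
    rw [Nat.succ_mul, sum_range_add, ih, sum_range_succ, Fin.sum_univ_eq_sum_range
      (fun a => g (k * N + a))]
    simp only [mul_comm N k]

theorem MeasureTheory.Measure.dirac_conv_sum_smul_dirac {M ι : Type*} [AddMonoid M]
    [MeasurableSpace M] [MeasurableAdd₂ M] (x : M) (s : Finset ι) (w : ι → NNReal) (y : ι → M) :
    dirac x ∗ ∑ m ∈ s, w m • dirac (y m) = ∑ m ∈ s, w m • dirac (x + y m) := by
  have hadd : Measurable (x + ·) := measurable_const_add x
  rw [Measure.dirac_conv, ← Measure.mapₗ_apply_of_measurable hadd, _root_.map_sum]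
  refine Finset.sum_congr rfl fun m _ => ?_
  rw [LinearMap.map_smul_of_tower, Measure.mapₗ_apply_of_measurable hadd, Measure.map_dirac' hadd]

theorem MeasureTheory.Measure.conv_nnreal_smul_right {M : Type*} [AddMonoid M]
    [MeasurableSpace M] (μ ν : Measure M) [SFinite ν] (c : NNReal) : μ ∗ (c • ν) = c • (μ ∗ ν) := by
  simpa only [ENNReal.smul_def] using Measure.conv_smul_right μ ν c

noncomputable def regComb {d : ℕ} (k : ℕ) (f : ℕ → Fin d → NNReal) (n : ℕ) (i : Fin d) :
    Measure (AddCircle (1 : ℝ)) :=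
  ∑ m ∈ range (k ^ (n + 1) - k ^ n),
    f (k ^ n + m) i •
      Measure.dirac (((m : ℝ) / ((k : ℝ) ^ n * ((k : ℝ) - 1)) : ℝ) : AddCircle (1 : ℝ))

theorem regMeasure_eq_smul_regComb {d : ℕ} (k : ℕ) (f : ℕ → Fin d → NNReal) (n : ℕ)
    (i : Fin d) : regMeasure k f n i = (regSigma k f i n)⁻¹ • regComb k f n i :=
  rfl

theorem regComb_eq_smul_regMeasure {d : ℕ} {k : ℕ} {f : ℕ → Fin d → NNReal} {n : ℕ}
    {i : Fin d} (hS : regSigma k f i n ≠ 0) :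
    regComb k f n i = regSigma k f i n • regMeasure k f n i := by
  rw [regMeasure_eq_smul_regComb, smul_smul, mul_inv_cancel₀ hS, one_smul]

instance {d : ℕ} (k : ℕ) (f : ℕ → Fin d → NNReal) (n : ℕ) (i : Fin d) :
    IsFiniteMeasure (regMeasure k f n i) := by
  unfold regMeasure
  infer_instance

theorem cast_digit_div_eq_add_div {k : ℕ} (hk : k ≠ 0) (n m a : ℕ) :
    ((k * m + a : ℕ) : ℝ) / ((k : ℝ) ^ (n + 1) * ((k : ℝ) - 1))
      = a / ((k : ℝ) ^ (n + 1) * ((k : ℝ) - 1)) + m / ((k : ℝ) ^ n * ((k : ℝ) - 1)) := by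
  rw [Nat.cast_add, Nat.cast_mul, add_div, add_comm, pow_succ', mul_assoc,
    mul_div_mul_left _ _ (Nat.cast_ne_zero.mpr hk)]

theorem regComb_succ {d k : ℕ} (B : Fin k → Matrix (Fin d) (Fin d) NNReal)
    (f : ℕ → Fin d → NNReal)
    (hf : ∀ m : ℕ, ∀ a : Fin k, f (k * m + (a : ℕ)) = (B a).mulVec (f m)) (n : ℕ) (i : Fin d) :
    regComb k f (n + 1) i
      = ∑ j : Fin d, ∑ a : Fin k, B a i j •
          Measure.dirac
            ((((a : ℕ) : ℝ) / ((k : ℝ) ^ (n + 1) * ((k : ℝ) - 1)) : ℝ) : AddCircle (1 : ℝ))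
            ∗ regComb k f n j := by
  have hlen : k ^ (n + 1 + 1) - k ^ (n + 1) = (k ^ (n + 1) - k ^ n) * k := by
    rw [Nat.sub_mul, ← pow_succ, ← pow_succ]
  have hdigit : ∀ (m : ℕ) (a : Fin k), f (k ^ (n + 1) + (k * m + a)) i
      = ∑ j, B a i j * f (k ^ n + m) j := fun m a => by
    rw [show k ^ (n + 1) + (k * m + a) = k * (k ^ n + m) + a by ring, hf]
    rfl
  simp only [regComb, Measure.dirac_conv_sum_smul_dirac, hlen,
    Finset.sum_range_mul_eq_sum_sum_fin, hdigit, sum_smul, smul_sum, smul_smul]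
  conv_lhs => rw [sum_comm]
  conv_rhs => rw [sum_comm]; enter [2, a]; rw [sum_comm]
  refine sum_congr rfl fun a _ => sum_congr rfl fun m _ => sum_congr rfl fun j _ => ?_
  rw [cast_digit_div_eq_add_div a.pos.ne', AddCircle.coe_add]

theorem measure_renormalisation_general {d k : ℕ}
    (B : Fin k → Matrix (Fin d) (Fin d) NNReal)
    (f : ℕ → Fin d → NNReal)
    (hf : ∀ m : ℕ, ∀ a : Fin k, f (k * m + (a : ℕ)) = (B a).mulVec (f m))
    (hS : ∀ i n, regSigma k f i n ≠ 0) :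
    ∀ n : ℕ, 1 ≤ n → ∀ i : Fin d,
      regMeasure k f n i
        = ∑ j : Fin d, (regSigma k f j (n - 1) * (regSigma k f i n)⁻¹) •
            ∑ a : Fin k, (B a i j) •
              Measure.conv
                (Measure.dirac
                  ((((a : ℕ) : ℝ) / ((k : ℝ) ^ n * ((k : ℝ) - 1)) : ℝ) : AddCircle (1 : ℝ)))
                (regMeasure k f (n - 1) j) := by
  rintro _ hn i
  obtain ⟨n, rfl⟩ := Nat.exists_eq_add_of_le' hn
  simp only [Nat.add_sub_cancel, regMeasure_eq_smul_regComb k f (n + 1), regComb_succ B f hf,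
    regComb_eq_smul_regMeasure (hS _ n), Measure.conv_nnreal_smul_right, smul_sum, smul_smul]
  refine sum_congr rfl fun j _ => sum_congr rfl fun a _ => ?_
  congr 1
  ring

/-- Renormalisation identity `𝛍ₙ = Aₙ(δ_{1/(k^n(k-1))}) 𝛍ₙ₋₁`: each entry of
the vector of approximant measures satisfies
`μₙ,ᵢ = Σⱼ Σ_a (Σⱼ(n-1)/Σᵢ(n)) (B_a)ᵢⱼ (δ_{a/(k^n(k-1))} ∗ μₙ₋₁,ⱼ)`,
where `∗` is convolution of measures on the circle and the Dirac combs come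
from evaluating the polynomial entries `bᵢⱼ(z)` of `B(z) = Σ_a B_a z^a` at
`δ_{1/(k^n(k-1))}` via `(δ_x)^r = δ_{rx}`. -/
theorem measure_renormalisation {d k : ℕ} (hk : 2 ≤ k)
    (B : Fin k → Matrix (Fin d) (Fin d) NNReal)
    (f : ℕ → Fin d → NNReal)
    (hf : ∀ m : ℕ, ∀ a : Fin k, f (k * m + (a : ℕ)) = (B a).mulVec (f m))
    (hS : ∀ i n, regSigma k f i n ≠ 0) :
    ∀ n : ℕ, 1 ≤ n → ∀ i : Fin d,
      regMeasure k f n i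
        = ∑ j : Fin d, (regSigma k f j (n - 1) * (regSigma k f i n)⁻¹) •
            ∑ a : Fin k, (B a i j) •
              Measure.conv
                (Measure.dirac
                  ((((a : ℕ) : ℝ) / ((k : ℝ) ^ n * ((k : ℝ) - 1)) : ℝ) : AddCircle (1 : ℝ)))
                (regMeasure k f (n - 1) j) :=
  measure_renormalisation_general B f hf hS
end
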